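/- In Ā[r] the identity η_R(a_3a_4) − a_3a_4 = 2r·(a_3^2 + 2a_2a_4) − a_2·(a_4r + a_3r^2 + a_2r^3) holds, where η_R(a_3a_4) = η_R(a_3)·η_R(a_4). -/

import Mathlib

/-!
`Abar = 𝔽_5[a_2,a_3,a_4]` (the variable `0,1,2 : Fin 3` are `a_2, a_3, a_4`),
`q(t) = t^5 + a_2t^3 + a_3t^2 + a_4t`, and `etaR : Abar → Abar[r]` is the
𝔽_5-algebra map sending `a_i` to the coefficient of `x^{5-i}` in `q(x+r) - q(r)`,
computed in `Abar[r][x]`.  This is the reduction modulo `(5, a_1, a_5)` of the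
Gorbounov–Hopkins–Mahowald Hopf algebroid at the prime `5`.
-/

/-- The ring `Ā = 𝔽_5[a_2,a_3,a_4]`. -/
abbrev Abar : Type := MvPolynomial (Fin 3) (ZMod 5)

/-- The generator `a_2`. -/
noncomputable def a2 : Abar := MvPolynomial.X 0
/-- The generator `a_3`. -/
noncomputable def a3 : Abar := MvPolynomial.X 1
/-- The generator `a_4`. -/
noncomputable def a4 : Abar := MvPolynomial.X 2

/-- The polynomial `q(t) = t^5 + a_2t^3 + a_3t^2 + a_4t` as an element of `Ā[t]`. -/
noncomputable def q : Polynomial Abar :=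
  Polynomial.X ^ 5 + Polynomial.C a2 * Polynomial.X ^ 3 + Polynomial.C a3 * Polynomial.X ^ 2 +
    Polynomial.C a4 * Polynomial.X

/-- `q(x+r) - q(r)`, an element of `Ā[r][x]` (the inner variable is `r`, the outer is `x`). -/
noncomputable def qShift : Polynomial (Polynomial Abar) :=
  Polynomial.eval₂ (Polynomial.C.comp Polynomial.C)
      (Polynomial.X + Polynomial.C Polynomial.X) q -
    Polynomial.eval₂ (Polynomial.C.comp Polynomial.C) (Polynomial.C Polynomial.X) q

/-- The right unit `η_R : Ā → Ā[r]`, sending `a_i` (for `i = 2,3,4`) to the coefficient of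
`x^{5-i}` in `q(x+r) - q(r)`. -/
noncomputable def etaR : Abar →ₐ[ZMod 5] Polynomial Abar :=
  MvPolynomial.aeval (fun k : Fin 3 => qShift.coeff (3 - k.1))

/-!
In characteristic `5` the binomial coefficients `C(5, k)`, `0 < k < 5`, vanish, so
`q(x + r) - q(r) = x^5 + a_2x^3 + (a_3 + 3a_2r)x^2 + (a_4 + 2a_3r + 3a_2r^2)x`.
Hence `η_R(a_3) = a_3 + 3a_2r` and `η_R(a_4) = a_4 + 2a_3r + 3a_2r^2`, and the identity is
a polynomial identity in `r` that holds modulo `5`.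
-/

open Polynomial

lemma quintic_shift_of_charP_five {S : Type*} [CommRing S] [CharP S 5] (a b c x r : S) :
    ((x + r) ^ 5 + a * (x + r) ^ 3 + b * (x + r) ^ 2 + c * (x + r)) -
        (r ^ 5 + a * r ^ 3 + b * r ^ 2 + c * r) =
      x ^ 5 + a * x ^ 3 + (b + 3 * a * r) * x ^ 2 + (c + 2 * b * r + 3 * a * r ^ 2) * x := by
  linear_combination (x * r ^ 4 + 2 * x ^ 2 * r ^ 3 + 2 * x ^ 3 * r ^ 2 + x ^ 4 * r) *
    CharP.ofNat_eq_zero S 5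

lemma taylor_quintic_of_charP_five {R : Type*} [CommRing R] [CharP R 5] (a b c : R) :
    eval₂ (C.comp C) (X + C X) (X ^ 5 + C a * X ^ 3 + C b * X ^ 2 + C c * X) -
        eval₂ (C.comp C) (C X) (X ^ 5 + C a * X ^ 3 + C b * X ^ 2 + C c * X) =
      X ^ 5 + C (C a) * X ^ 3 + C (C b + 3 * C a * X) * X ^ 2 +
        C (C c + 2 * C b * X + 3 * C a * X ^ 2) * X := by
  simp only [eval₂_add, eval₂_mul, eval₂_X_pow, eval₂_X, eval₂_C, RingHom.coe_comp,
    Function.comp_apply, quintic_shift_of_charP_five, map_add, map_mul, map_pow, map_ofNat]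

lemma qShift_eq : qShift =
    X ^ 5 + C (C a2) * X ^ 3 + C (C a3 + 3 * C a2 * X) * X ^ 2 +
      C (C a4 + 2 * C a3 * X + 3 * C a2 * X ^ 2) * X :=
  taylor_quintic_of_charP_five a2 a3 a4

lemma etaR_X (k : Fin 3) : etaR (MvPolynomial.X k) = qShift.coeff (3 - k) :=
  MvPolynomial.aeval_X _ k

lemma etaR_a3 : etaR a3 = C a3 + 3 * C a2 * X := by
  show etaR (MvPolynomial.X 1) = _
  rw [etaR_X, qShift_eq]
  simp only [coeff_add, coeff_X_pow, coeff_C_mul_X_pow, coeff_C_mul_X]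
  norm_num

lemma etaR_a4 : etaR a4 = C a4 + 2 * C a3 * X + 3 * C a2 * X ^ 2 := by
  show etaR (MvPolynomial.X 2) = _
  rw [etaR_X, qShift_eq]
  simp only [coeff_add, coeff_X_pow, coeff_C_mul_X_pow, coeff_C_mul_X]
  norm_num

/-- `η_R(a_3a_4) − a_3a_4 = 2r·(a_3² + 2a_2a_4) − a_2·(a_4r + a_3r² + a_2r³)` in `Ā[r]`. -/
theorem coboundary_a3a4 :
    etaR (a3 * a4) - Polynomial.C (a3 * a4) =
      2 * Polynomial.X * Polynomial.C (a3 ^ 2 + 2 * a2 * a4) -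
        Polynomial.C a2 *
          (Polynomial.C a4 * Polynomial.X + Polynomial.C a3 * Polynomial.X ^ 2 +
            Polynomial.C a2 * Polynomial.X ^ 3) := by
  rw [map_mul, etaR_a3, etaR_a4]
  simp only [map_add, map_mul, map_pow, map_ofNat]
  -- the two sides differ by `10 a_2 r^2 (a_3 + a_2 r)`
  linear_combination (2 * C a2 * C a3 * X ^ 2 + 2 * C a2 ^ 2 * X ^ 3) *
    CharP.ofNat_eq_zero Abar[X] 5
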